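/- Let G = (V, E) be a multigraph and k ∈ ℤ_{>0}. If G contains a k-trail, then G is a (k+1)-trail. -/

import Mathlib

/-- A multigraph on vertex type `V`: a finite multiset of unordered pairs of
vertices (loops and parallel edges allowed). -/
structure Multigraph (V : Type) where
  edges : Multiset (Sym2 V)

namespace Multigraph

open Classical in
/-- The degree of a vertex: number of edge-endpoints at `v`, a loop counting twice. -/
noncomputable def deg {V : Type} (G : Multigraph V) (v : V) : ℕ :=
  (G.edges.map fun e => if e = Sym2.diag v then 2 else if v ∈ e then 1 else 0).sum

/-- Adjacency in a multigraph. -/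
def Adj {V : Type} (G : Multigraph V) (u v : V) : Prop := s(u, v) ∈ G.edges

/-- A multigraph is connected if it has a vertex and any two vertices are joined by a walk. -/
def Connected {V : Type} (G : Multigraph V) : Prop :=
  Nonempty V ∧ ∀ u v : V, Relation.ReflTransGen G.Adj u v

open Classical in
/-- `G` is the homomorphic image of `H` by the onto function `φ`: for all `u v`,
the number of edges of `G` between `u` and `v` equals the number of edges of `H`
whose endpoints are mapped by `φ` to `{u, v}`. -/
def IsHomImage {V W : Type} (G : Multigraph V) (H : Multigraph W) (φ : W → V) : Prop :=
  Function.Surjective φ ∧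
    ∀ u v : V, G.edges.count s(u, v) = (H.edges.map (Sym2.map φ)).count s(u, v)

/-- A tree: a connected multigraph with `|F| = |W| - 1`. -/
def IsTree {W : Type} (H : Multigraph W) : Prop :=
  Connected H ∧ Multiset.card H.edges + 1 = Nat.card W

/-- A multigraph is a `k`-trail if it is the homomorphic image of a (finite)
connected multigraph of maximum degree at most `k`. -/
def IsKTrail {V : Type} (G : Multigraph V) (k : ℕ) : Prop :=
  ∃ (W : Type) (_ : Finite W) (H : Multigraph W) (φ : W → V),
    Connected H ∧ (∀ w, H.deg w ≤ k) ∧ IsHomImage G H φ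

/-- `G` contains a `k`-trail if some submultiset `U` of its edges gives a `k`-trail `(V, U)`. -/
def ContainsKTrail {V : Type} (G : Multigraph V) (k : ℕ) : Prop :=
  ∃ U : Multiset (Sym2 V), U ≤ G.edges ∧ IsKTrail (Multigraph.mk U) k

/-- `lam` is a feasible multiplicity vector for `G`. -/
def FeasibleMult {V : Type} (G : Multigraph V) (lam : V → ℕ) : Prop :=
  ∃ (W : Type) (_ : Finite W) (H : Multigraph W) (φ : W → V),
    Connected H ∧ IsHomImage G H φ ∧ ∀ v : V, Nat.card (φ ⁻¹' {v}) = lam v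

end Multigraph

open Multigraph

/-!
Let `H → (V, U)` exhibit a `k`-trail contained in `G`. The remaining edges `E - U` split into walks
with pairwise distinct initial vertices, since two walks leaving the same vertex merge into one.
Hang each walk off `H` as a pendant path rooted at a preimage of its initial vertex: the roots are
distinct vertices of degree at most `k`, each gaining a single edge, and the new vertices have
degree at most `2 ≤ k + 1`. The enlarged graph is connected, has maximum degree at most `k + 1`,
and maps onto `G`.
-/

namespace Multigraph

variable {V W : Type}

lemma deg_mk_add (E F : Multiset (Sym2 V)) (v : V) :
    deg ⟨E + F⟩ v = deg ⟨E⟩ v + deg ⟨F⟩ v := by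
  simp only [deg, Multiset.map_add, Multiset.sum_add]

lemma deg_mk_map_apply {f : W → V} (hf : Function.Injective f) (E : Multiset (Sym2 W)) (w : W) :
    deg ⟨E.map (Sym2.map f)⟩ (f w) = deg ⟨E⟩ w := by
  simp only [deg, Multiset.map_map]
  refine congrArg _ (Multiset.map_congr rfl fun e _ => ?_)
  have hdiag : Sym2.map f e = Sym2.diag (f w) ↔ e = Sym2.diag w :=
    (Sym2.map.injective hf).eq_iff' rfl
  have hmem : f w ∈ Sym2.map f e ↔ w ∈ e := by simp [Sym2.mem_map, hf.eq_iff]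
  simp only [Function.comp_apply]
  split_ifs <;> tauto

lemma deg_mk_map_of_notMem_range {f : W → V} {v : V} (hv : v ∉ Set.range f)
    (E : Multiset (Sym2 W)) : deg ⟨E.map (Sym2.map f)⟩ v = 0 := by
  simp only [deg, Multiset.map_map]
  refine Multiset.sum_eq_zero fun n hn => ?_
  obtain ⟨e, -, rfl⟩ := Multiset.mem_map.1 hn
  have hmem : v ∉ Sym2.map f e := fun h =>
    let ⟨a, _, ha⟩ := Sym2.mem_map.1 h; hv ⟨a, ha⟩
  have hdiag : Sym2.map f e ≠ Sym2.diag v := fun h => hmem (h ▸ Sym2.mem_mk_left v v)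
  simp only [Function.comp_apply, hdiag, hmem, if_false]

instance (G : Multigraph V) : Std.Symm G.Adj :=
  ⟨fun _ _ h => by rwa [Adj, Sym2.eq_swap]⟩

lemma connected_of_forall_reflTransGen {G : Multigraph V} (v₀ : V)
    (h : ∀ v, Relation.ReflTransGen G.Adj v v₀) : G.Connected :=
  ⟨⟨v₀⟩, fun u v => (h u).trans (Std.Symm.symm _ _ (h v))⟩

section addLeaf

def addLeaf (H : Multigraph W) (w₀ : W) : Multigraph (Option W) :=
  ⟨H.edges.map (Sym2.map some) + {s(some w₀, none)}⟩

variable (H : Multigraph W) (w₀ : W)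

lemma addLeaf_connected (hH : H.Connected) : (H.addLeaf w₀).Connected := by
  have hleaf : (H.addLeaf w₀).Adj none (some w₀) := by
    simp [Adj, addLeaf, Sym2.eq_swap]
  have hlift : ∀ a b, H.Adj a b → (H.addLeaf w₀).Adj (some a) (some b) := fun a b h =>
    Multiset.mem_add.2 (Or.inl (Multiset.mem_map_of_mem (Sym2.map some) h))
  refine connected_of_forall_reflTransGen (some w₀) fun o => ?_
  cases o with
  | none => exact .single hleaf
  | some w => exact Relation.ReflTransGen.lift some hlift _ _ (hH.2 w w₀)

lemma map_addLeaf_edges (φ : W → V) (v : V) :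
    (H.addLeaf w₀).edges.map (Sym2.map (Option.elim' v φ)) =
      H.edges.map (Sym2.map φ) + {s(φ w₀, v)} := by
  simp [addLeaf, Multiset.map_map, Function.comp_def, Sym2.map_map]

lemma deg_addLeaf_none : (H.addLeaf w₀).deg none = 1 := by
  rw [addLeaf, deg_mk_add, deg_mk_map_of_notMem_range (by simp)]
  simp [deg, Sym2.diag]

lemma deg_addLeaf_some_self : (H.addLeaf w₀).deg (some w₀) = H.deg w₀ + 1 := by
  rw [addLeaf, deg_mk_add, deg_mk_map_apply (Option.some_injective W)]
  simp [deg, Sym2.diag]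

lemma deg_addLeaf_some_of_ne {w : W} (hw : w ≠ w₀) : (H.addLeaf w₀).deg (some w) = H.deg w := by
  rw [addLeaf, deg_mk_add, deg_mk_map_apply (Option.some_injective W)]
  simp [deg, Sym2.diag, hw]

end addLeaf

/-- A walk is encoded as the list of the vertices it visits. -/
def walkEdges : List V → Multiset (Sym2 V)
  | a :: b :: l => s(a, b) ::ₘ walkEdges (b :: l)
  | _ => 0

@[simp] lemma walkEdges_nil : walkEdges ([] : List V) = 0 := rfl

@[simp] lemma walkEdges_singleton (a : V) : walkEdges [a] = 0 := rfl

@[simp] lemma walkEdges_cons_cons (a b : V) (l : List V) :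
    walkEdges (a :: b :: l) = s(a, b) ::ₘ walkEdges (b :: l) := rfl

lemma walkEdges_append_cons (l₁ : List V) (a : V) (l₂ : List V) :
    walkEdges (l₁ ++ a :: l₂) = walkEdges (l₁ ++ [a]) + walkEdges (a :: l₂) := by
  match l₁ with
  | [] => simp
  | [_] => simp
  | x :: y :: l₁ =>
    have ih := walkEdges_append_cons (y :: l₁) a l₂
    simp only [List.cons_append, walkEdges_cons_cons] at ih ⊢
    rw [ih, Multiset.cons_add]

@[simp] lemma walkEdges_reverse : ∀ l : List V, walkEdges l.reverse = walkEdges l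
  | [] | [_] => rfl
  | a :: b :: l => by
    rw [List.reverse_cons, List.reverse_cons, List.append_assoc, List.singleton_append,
      walkEdges_append_cons, ← List.reverse_cons, walkEdges_reverse (b :: l),
      walkEdges_cons_cons, walkEdges_singleton, Multiset.add_cons, add_zero, Sym2.eq_swap]
    rfl

/-- Two walks leaving the same vertex combine into one walk: run the first backwards, then the
second. -/
lemma walkEdges_reverse_append_tail {p q : List V} (h : p.head? = q.head?) :
    walkEdges (p.reverse ++ q.tail) = walkEdges p + walkEdges q := by
  match p, q with
  | [], [] => rfl
  | a :: l, b :: m =>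
    obtain rfl : a = b := by simpa using h
    rw [List.reverse_cons, List.tail_cons, List.append_assoc, List.singleton_append,
      walkEdges_append_cons, ← List.reverse_cons, walkEdges_reverse]

lemma exists_walks_nodup_head_sum_cons (p : List V) (T : List (List V))
    (hT : (T.map List.head?).Nodup) :
    ∃ L : List (List V), (L.map List.head?).Nodup ∧
      (L.map walkEdges).sum = walkEdges p + (T.map walkEdges).sum := by
  by_cases hp : p.head? ∈ T.map List.head?
  · obtain ⟨q, hq, hpq⟩ := List.mem_map.1 hp
    obtain ⟨s, t, rfl⟩ := List.append_of_mem hq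
    have hst : ((s ++ t).map List.head?).Nodup :=
      hT.sublist (((List.Sublist.refl s).append (List.sublist_cons_self q t)).map _)
    obtain ⟨L, hL, hsum⟩ := exists_walks_nodup_head_sum_cons (p.reverse ++ q.tail) (s ++ t) hst
    refine ⟨L, hL, ?_⟩
    rw [hsum, walkEdges_reverse_append_tail hpq.symm]
    simp only [List.map_append, List.map_cons, List.sum_append, List.sum_cons]
    abel
  · exact ⟨p :: T, List.nodup_cons.2 ⟨hp, hT⟩, List.sum_cons⟩
termination_by T.length
decreasing_by subst_vars; simp

lemma exists_walks_nodup_head_sum (D : Multiset (Sym2 V)) :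
    ∃ L : List (List V), (L.map List.head?).Nodup ∧ (L.map walkEdges).sum = D := by
  induction D using Multiset.induction_on with
  | empty => exact ⟨[], List.nodup_nil, rfl⟩
  | cons e D ih =>
    obtain ⟨T, hT, rfl⟩ := ih
    induction e using Sym2.ind with
    | _ u v => simpa using exists_walks_nodup_head_sum_cons [u, v] T hT

lemma exists_attach_walk [Finite W] (H : Multigraph W) (hH : H.Connected) (φ : W → V) (w₀ : W)
    (l : List V) :
    ∃ (W' : Type) (_ : Finite W') (H' : Multigraph W') (φ' : W' → V) (ι : W → W'),
      H'.Connected ∧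
      H'.edges.map (Sym2.map φ') = H.edges.map (Sym2.map φ) + walkEdges (φ w₀ :: l) ∧
      φ' ∘ ι = φ ∧ H'.deg (ι w₀) ≤ H.deg w₀ + 1 ∧ (∀ w ≠ w₀, H'.deg (ι w) = H.deg w) ∧
      ∀ x ∉ Set.range ι, H'.deg x ≤ 2 := by
  induction l generalizing W with
  | nil =>
    exact ⟨W, inferInstance, H, φ, id, hH, by simp, rfl, Nat.le_succ _, fun _ _ => rfl,
      fun x hx => absurd ⟨x, rfl⟩ hx⟩
  | cons v l ih =>
    obtain ⟨W', _, H', φ', ι, hH', hE', hφ', hdeg₀, hdeg, hnew⟩ :=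
      ih (H.addLeaf w₀) (addLeaf_connected H w₀ hH) (Option.elim' v φ) none
    refine ⟨W', inferInstance, H', φ', ι ∘ some, hH', ?_, ?_, ?_, fun w hw => ?_, fun x hx => ?_⟩
    · rw [hE', map_addLeaf_edges, Option.elim'_none, walkEdges_cons_cons, add_assoc,
        Multiset.singleton_add]
    · rw [← Function.comp_assoc, hφ']
      rfl
    · rw [Function.comp_apply, hdeg (some w₀) (Option.some_ne_none w₀), deg_addLeaf_some_self]
    · rw [Function.comp_apply, hdeg (some w) (Option.some_ne_none w),
        deg_addLeaf_some_of_ne H w₀ hw]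
    · by_cases hx₀ : x = ι none
      · simpa [hx₀, deg_addLeaf_none] using hdeg₀
      · refine hnew x fun ⟨o, ho⟩ => ?_
        cases o with
        | none => exact hx₀ ho.symm
        | some w => exact hx ⟨w, ho⟩

lemma isKTrail_add_walks {k : ℕ} (hk : 1 ≤ k) [Finite W] (H : Multigraph W) (hH : H.Connected)
    (φ : W → V) (hφ : Function.Surjective φ) (hdeg : ∀ w, H.deg w ≤ k + 1)
    (L : List (List V)) (hL : (L.map List.head?).Nodup)
    (hstart : ∀ p ∈ L, ∀ a ∈ p.head?, ∃ w, φ w = a ∧ H.deg w ≤ k) :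
    IsKTrail ⟨H.edges.map (Sym2.map φ) + (L.map walkEdges).sum⟩ (k + 1) := by
  induction L generalizing W with
  | nil => exact ⟨W, inferInstance, H, φ, hH, hdeg, hφ, fun u v => by simp⟩
  | cons p T ih =>
    obtain ⟨hpT, hT⟩ := List.nodup_cons.1 hL
    cases p with
    | nil => simpa using ih H hH φ hφ hdeg hT fun q hq => hstart q (List.mem_cons_of_mem _ hq)
    | cons a l =>
      obtain ⟨w₀, rfl, hw₀⟩ := hstart _ List.mem_cons_self a rfl
      obtain ⟨W', _, H', φ', ι, hH', hE', hφ', hdeg₀, hdeg', hnew⟩ :=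
        exists_attach_walk H hH φ w₀ l
      have hdegH' : ∀ x, H'.deg x ≤ k + 1 := by
        intro x
        by_cases hx : x ∈ Set.range ι
        · obtain ⟨w, rfl⟩ := hx
          by_cases hw : w = w₀
          · subst hw; omega
          · rw [hdeg' w hw]; exact hdeg w
        · have := hnew x hx; omega
      have hstart' : ∀ q ∈ T, ∀ b ∈ q.head?, ∃ x, φ' x = b ∧ H'.deg x ≤ k := by
        intro q hq b hb
        obtain ⟨w, rfl, hw⟩ := hstart q (List.mem_cons_of_mem _ hq) b hb
        have hww₀ : w ≠ w₀ := by
          rintro rfl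
          exact hpT (List.mem_map.2 ⟨q, hq, Option.mem_def.1 hb⟩)
        exact ⟨ι w, congrFun hφ' w, (hdeg' w hww₀).trans_le hw⟩
      have := ih H' hH' φ' (Function.Surjective.of_comp (hφ' ▸ hφ)) hdegH' hT hstart'
      rwa [hE', add_assoc, ← List.sum_cons, ← List.map_cons] at this

lemma edges_eq_map_of_isHomImage {G : Multigraph V} {H : Multigraph W} {φ : W → V}
    (h : IsHomImage G H φ) : G.edges = H.edges.map (Sym2.map φ) := by
  classical
  exact Multiset.ext.2 fun e => e.ind h.2

lemma IsKTrail.succ_add {k : ℕ} (hk : 1 ≤ k) {U : Multiset (Sym2 V)} (hU : IsKTrail ⟨U⟩ k)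
    (D : Multiset (Sym2 V)) : IsKTrail ⟨U + D⟩ (k + 1) := by
  obtain ⟨W, _, H, φ, hH, hdeg, hφ⟩ := hU
  obtain ⟨L, hL, rfl⟩ := exists_walks_nodup_head_sum D
  obtain rfl : U = H.edges.map (Sym2.map φ) := edges_eq_map_of_isHomImage hφ
  refine isKTrail_add_walks hk H hH φ hφ.1 (fun w => (hdeg w).trans k.le_succ) L hL ?_
  intro p _ a _
  obtain ⟨w, hw⟩ := hφ.1 a
  exact ⟨w, hw, hdeg w⟩

end Multigraph

theorem containsKTrail_isSuccTrail_general {V : Type}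
    (G : Multigraph V) (k : ℕ) (hk : 1 ≤ k)
    (h : ContainsKTrail G k) :
    IsKTrail G (k + 1) := by
  classical
  obtain ⟨U, hUG, hU⟩ := h
  have hG : G = ⟨U + (G.edges - U)⟩ := by
    rw [add_tsub_cancel_of_le hUG]
  rw [hG]
  exact hU.succ_add hk _

/-- If `G` contains a `k`-trail then `G` is a `(k+1)`-trail. -/
theorem containsKTrail_isSuccTrail {V : Type} [Finite V]
    (hV : 2 ≤ Nat.card V)
    (G : Multigraph V) (k : ℕ) (hk : 1 ≤ k)
    (h : ContainsKTrail G k) :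
    IsKTrail G (k + 1) :=
  containsKTrail_isSuccTrail_general G k hk h
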